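/- arXiv:1803.08761 — 3 statements merged into one kernel-verified Lean document; each statement's English description precedes it below -/
import Mathlib

section
/- Let (U_i)_{i≥1} be i.i.d. random variables with values in [0,∞], with P(U_1 = ∞) > 0, and suppose there exist constants C₁, C₂ > 0 such that P(t < U_1 < ∞) ≤ C₁ e^{−C₂ t} for all t > 0. Let L = min{i : U_i = ∞} and T = Σ_{i=1}^{L−1} U_i (with T = 0 if L = 1). Then there exists β > 0 such that E[e^{β T}] < ∞; in particular T has exponentially decaying tail probabilities. -/
/-!
Let `m(β) = E[e^{βU}; U < ∞]`. Splitting according to the first index `L` with `U_L = ∞` and using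
independence, `E[e^{βT}] ≤ 1 + ∑_l m(β)^l P(U = ∞)`, a geometric series that converges as soon as
`m(β) < 1`. By the layer-cake formula the exponential tail gives the finite part of `U` a finite
exponential moment of order `C₂ / 2`, so by dominated convergence `m(β) → P(U < ∞) < 1` as `β → 0`.
-/

open MeasureTheory ProbabilityTheory Filter
open scoped ENNReal Topology

lemma integral_mul_exp_mul (γ a b : ℝ) :
    ∫ t in a..b, γ * Real.exp (γ * t) = Real.exp (γ * b) - Real.exp (γ * a) := by
  refine intervalIntegral.integral_deriv_eq_sub' (fun t => Real.exp (γ * t)) ?_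
    (fun t _ => by fun_prop) (by fun_prop)
  ext t
  simpa [mul_comm] using ((hasDerivAt_id t).const_mul γ).exp.deriv

noncomputable def expOnFinite (β : ℝ) (x : ℝ≥0∞) : ℝ≥0∞ :=
  if x = ⊤ then 0 else ENNReal.ofReal (Real.exp (β * x.toReal))

lemma measurable_expOnFinite (β : ℝ) : Measurable (expOnFinite β) :=
  Measurable.ite (measurableSet_singleton ⊤) measurable_const (by fun_prop)

lemma continuous_expOnFinite_left (x : ℝ≥0∞) : Continuous fun β => expOnFinite β x := by
  unfold expOnFinite
  split_ifs
  · exact continuous_const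
  · exact ENNReal.continuous_ofReal.comp (by fun_prop)

lemma expOnFinite_zero (x : ℝ≥0∞) : expOnFinite 0 x = ({⊤}ᶜ : Set ℝ≥0∞).indicator 1 x := by
  by_cases hx : x = ⊤ <;> simp [expOnFinite, hx]

lemma expOnFinite_le_ofReal_exp_of_le {β γ : ℝ} (h : β ≤ γ) (x : ℝ≥0∞) :
    expOnFinite β x ≤ ENNReal.ofReal (Real.exp (γ * x.toReal)) := by
  unfold expOnFinite
  split_ifs
  · exact zero_le
  · gcongr

/-- Only the term `l = sInf {i | u i = ⊤}` of the series can be nonzero; the `1` covers the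
sequences that never reach `⊤`, for which `sInf ∅ = 0`. -/
lemma ofReal_exp_sum_le_one_add_tsum (β : ℝ) (u : ℕ → ℝ≥0∞) :
    ENNReal.ofReal (Real.exp (β * (∑ i ∈ Finset.range (sInf {i | u i = ⊤}), u i).toReal)) ≤
      1 + ∑' l, (∏ i ∈ Finset.range l, expOnFinite β (u i)) *
        ({⊤} : Set ℝ≥0∞).indicator 1 (u l) := by
  by_cases h : {i | u i = ⊤}.Nonempty
  · set L := sInf {i | u i = ⊤}
    have hL : u L = ⊤ := Nat.sInf_mem h
    have hlt (i : ℕ) (hi : i ∈ Finset.range L) : u i ≠ ⊤ :=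
      Nat.notMem_of_lt_sInf (Finset.mem_range.1 hi)
    have hterm : ENNReal.ofReal (Real.exp (β * (∑ i ∈ Finset.range L, u i).toReal)) =
        (∏ i ∈ Finset.range L, expOnFinite β (u i)) * ({⊤} : Set ℝ≥0∞).indicator 1 (u L) := by
      rw [hL, Set.indicator_of_mem (Set.mem_singleton ⊤), Pi.one_apply, mul_one,
        ENNReal.toReal_sum hlt, Finset.mul_sum, Real.exp_sum,
        ENNReal.ofReal_prod_of_nonneg fun i _ => (Real.exp_pos _).le]
      exact Finset.prod_congr rfl fun i hi => (if_neg (hlt i hi)).symm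
    rw [hterm]
    exact le_add_left (ENNReal.le_tsum L)
  · rw [Set.not_nonempty_iff_eq_empty.1 h, Nat.sInf_empty]
    simp

section

variable {Ω : Type*} [MeasurableSpace Ω] {μ : Measure Ω}

theorem lintegral_exp_mul_lt_top_of_meas_lt_le [IsFiniteMeasure μ] {f : Ω → ℝ}
    (hf_nn : 0 ≤ᵐ[μ] f) (hf : AEMeasurable f μ) {C₁ C₂ γ : ℝ} (hγ : 0 ≤ γ) (hγC₂ : γ < C₂)
    (htail : ∀ t > 0, μ {a | t < f a} ≤ ENNReal.ofReal (C₁ * Real.exp (-C₂ * t))) :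
    ∫⁻ a, ENNReal.ofReal (Real.exp (γ * f a)) ∂μ < ⊤ := by
  have hlayer : ∫⁻ a, ENNReal.ofReal (Real.exp (γ * f a) - 1) ∂μ < ⊤ := by
    have h := lintegral_comp_eq_lintegral_meas_lt_mul μ hf_nn hf
      (g := fun t => γ * Real.exp (γ * t))
      (fun t _ => by apply Continuous.intervalIntegrable; fun_prop)
      (ae_of_all _ fun t => by positivity)
    simp only [integral_mul_exp_mul, mul_zero, Real.exp_zero] at h
    rw [h]
    calc ∫⁻ t in Set.Ioi 0, μ {a | t < f a} * ENNReal.ofReal (γ * Real.exp (γ * t))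
        ≤ ∫⁻ t in Set.Ioi 0, ENNReal.ofReal (C₁ * γ * Real.exp ((γ - C₂) * t)) := by
          refine setLIntegral_mono' measurableSet_Ioi fun t ht => ?_
          calc μ {a | t < f a} * ENNReal.ofReal (γ * Real.exp (γ * t))
              ≤ ENNReal.ofReal (C₁ * Real.exp (-C₂ * t)) *
                  ENNReal.ofReal (γ * Real.exp (γ * t)) :=
                mul_le_mul_left (htail t ht) _
            _ = ENNReal.ofReal (C₁ * γ * Real.exp ((γ - C₂) * t)) := by
                rw [← ENNReal.ofReal_mul' (by positivity)]
                congr 1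
                rw [sub_mul, sub_eq_add_neg, Real.exp_add]
                ring_nf
      _ < ⊤ := ((integrableOn_exp_mul_Ioi (by linarith) 0).const_mul (C₁ * γ)).lintegral_lt_top
  calc ∫⁻ a, ENNReal.ofReal (Real.exp (γ * f a)) ∂μ
      ≤ ∫⁻ a, 1 + ENNReal.ofReal (Real.exp (γ * f a) - 1) ∂μ := lintegral_mono fun a => by
        simpa [← ENNReal.ofReal_one] using
          ENNReal.ofReal_add_le (p := 1) (q := Real.exp (γ * f a) - 1)
    _ = μ Set.univ + ∫⁻ a, ENNReal.ofReal (Real.exp (γ * f a) - 1) ∂μ := by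
        rw [lintegral_add_left measurable_const, lintegral_const, one_mul]
    _ < ⊤ := ENNReal.add_lt_top.2 ⟨measure_lt_top μ _, hlayer⟩

theorem tendsto_lintegral_expOnFinite_nhds_zero {X : Ω → ℝ≥0∞} (hX : Measurable X) {γ : ℝ}
    (hγ : 0 < γ) (hmoment : ∫⁻ ω, ENNReal.ofReal (Real.exp (γ * (X ω).toReal)) ∂μ ≠ ⊤) :
    Tendsto (fun β => ∫⁻ ω, expOnFinite β (X ω) ∂μ) (𝓝 0) (𝓝 (μ {ω | X ω ≠ ⊤})) := by
  have hlim : ∫⁻ ω, expOnFinite 0 (X ω) ∂μ = μ {ω | X ω ≠ ⊤} := by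
    simp_rw [expOnFinite_zero]
    exact lintegral_indicator_one (hX (measurableSet_singleton ⊤).compl)
  rw [← hlim]
  refine tendsto_lintegral_filter_of_dominated_convergence _
    (Eventually.of_forall fun β => (measurable_expOnFinite β).comp hX) ?_ hmoment
    (ae_of_all _ fun ω => (continuous_expOnFinite_left (X ω)).tendsto 0)
  filter_upwards [Iic_mem_nhds hγ] with β hβ
  exact ae_of_all _ fun ω => expOnFinite_le_ofReal_exp_of_le hβ (X ω)

theorem exists_pos_lintegral_expOnFinite_lt_one [IsProbabilityMeasure μ] {X : Ω → ℝ≥0∞}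
    (hX : Measurable X) (hpos : 0 < μ {ω | X ω = ⊤}) {C₁ C₂ : ℝ} (hC₂ : 0 < C₂)
    (htail : ∀ t : ℝ, 0 < t →
      μ {ω | ENNReal.ofReal t < X ω ∧ X ω ≠ ⊤} ≤ ENNReal.ofReal (C₁ * Real.exp (-C₂ * t))) :
    ∃ β : ℝ, 0 < β ∧ ∫⁻ ω, expOnFinite β (X ω) ∂μ < 1 := by
  have hsub (t : ℝ) (ht : 0 < t) :
      {ω | t < (X ω).toReal} ⊆ {ω | ENNReal.ofReal t < X ω ∧ X ω ≠ ⊤} := fun ω hω => by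
    have hfin : X ω ≠ ⊤ := fun h => by simp [h] at hω; linarith
    exact ⟨(ENNReal.ofReal_lt_iff_lt_toReal ht.le hfin).2 hω, hfin⟩
  have hmoment := lintegral_exp_mul_lt_top_of_meas_lt_le
    (ae_of_all μ fun ω => ENNReal.toReal_nonneg) hX.ennreal_toReal.aemeasurable
    (half_pos hC₂).le (half_lt_self hC₂) fun t ht => (measure_mono (hsub t ht)).trans (htail t ht)
  have hfinite : μ {ω | X ω ≠ ⊤} < 1 := by
    rw [← Set.compl_ofPred, prob_compl_eq_one_sub (measurableSet_eq_fun hX measurable_const)]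
    exact ENNReal.sub_lt_self ENNReal.one_ne_top one_ne_zero hpos.ne'
  have hev := (tendsto_lintegral_expOnFinite_nhds_zero hX (half_pos hC₂) hmoment.ne).eventually
    (gt_mem_nhds hfinite)
  obtain ⟨β, hβ, hβ_pos⟩ :=
    ((eventually_nhdsWithin_of_eventually_nhds hev).and self_mem_nhdsWithin).exists
      (f := 𝓝[>] (0 : ℝ))
  exact ⟨β, hβ_pos, hβ⟩

theorem lintegral_prod_range_mul_eq_pow_mul {E : Type*} [MeasurableSpace E] {U : ℕ → Ω → E}
    (hU : ∀ i, Measurable (U i)) (hindep : iIndepFun U μ)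
    (hident : ∀ i, IdentDistrib (U i) (U 0) μ μ) {g g' : E → ℝ≥0∞} (hg : Measurable g)
    (hg' : Measurable g') (l : ℕ) :
    ∫⁻ ω, (∏ i ∈ Finset.range l, g (U i ω)) * g' (U l ω) ∂μ =
      (∫⁻ ω, g (U 0 ω) ∂μ) ^ l * ∫⁻ ω, g' (U 0 ω) ∂μ := by
  set φ : ℕ → E → ℝ≥0∞ := Function.update (fun _ => g) l g'
  have hφ (i : ℕ) : Measurable (φ i) := by
    unfold φ
    rcases eq_or_ne i l with rfl | hi
    · simpa using hg'
    · simpa [hi] using hg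
  have hφ_lt (i : ℕ) (hi : i ∈ Finset.range l) : φ i = g :=
    Function.update_of_ne (Finset.mem_range.1 hi).ne _ _
  have hφ_l : φ l = g' := Function.update_self _ _ _
  have hlintegral_eq (ψ : E → ℝ≥0∞) (hψ : Measurable ψ) (i : ℕ) :
      ∫⁻ ω, ψ (U i ω) ∂μ = ∫⁻ ω, ψ (U 0 ω) ∂μ :=
    ((hident i).comp hψ).lintegral_eq
  have hfactor := lintegral_prod_eq_prod_lintegral_of_indepFun (Finset.range (l + 1))
    (fun i ω => φ i (U i ω)) (hindep.comp φ hφ) fun i => (hφ i).comp (hU i)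
  simp only [Finset.prod_range_succ] at hfactor
  calc ∫⁻ ω, (∏ i ∈ Finset.range l, g (U i ω)) * g' (U l ω) ∂μ
      = ∫⁻ ω, (∏ i ∈ Finset.range l, φ i (U i ω)) * φ l (U l ω) ∂μ := by
        refine lintegral_congr fun ω => ?_
        rw [hφ_l, Finset.prod_congr rfl fun i hi => congrFun (hφ_lt i hi) (U i ω)]
    _ = (∏ i ∈ Finset.range l, ∫⁻ ω, φ i (U i ω) ∂μ) * ∫⁻ ω, φ l (U l ω) ∂μ := hfactor
    _ = (∫⁻ ω, g (U 0 ω) ∂μ) ^ l * ∫⁻ ω, g' (U 0 ω) ∂μ := by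
        rw [Finset.prod_congr rfl fun i hi => by rw [hφ_lt i hi, hlintegral_eq g hg i],
          Finset.prod_const, Finset.card_range, hφ_l, hlintegral_eq g' hg' l]

end

theorem stmt_1_general {Ω : Type*} [MeasurableSpace Ω] (μ : Measure Ω) [IsProbabilityMeasure μ]
    (U : ℕ → Ω → ℝ≥0∞) (hmeas : ∀ i, Measurable (U i))
    (hindep : iIndepFun U μ)
    (hident : ∀ i, IdentDistrib (U i) (U 0) μ μ)
    (hpos : 0 < μ {ω | U 0 ω = ⊤})
    (C₁ C₂ : ℝ) (hC₂ : 0 < C₂)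
    (htail : ∀ t : ℝ, 0 < t →
      μ {ω | ENNReal.ofReal t < U 0 ω ∧ U 0 ω ≠ ⊤} ≤
        ENNReal.ofReal (C₁ * Real.exp (-C₂ * t))) :
    ∃ β : ℝ, 0 < β ∧
      ∫⁻ ω, ENNReal.ofReal
        (Real.exp (β * (∑ i ∈ Finset.range (sInf {i | U i ω = ⊤}), U i ω).toReal)) ∂μ < ⊤ := by
  obtain ⟨β, hβ, hm⟩ := exists_pos_lintegral_expOnFinite_lt_one (hmeas 0) hpos hC₂ htail
  refine ⟨β, hβ, ?_⟩
  set m := ∫⁻ ω, expOnFinite β (U 0 ω) ∂μ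
  have hind_meas : Measurable (({⊤} : Set ℝ≥0∞).indicator (1 : ℝ≥0∞ → ℝ≥0∞)) :=
    measurable_one.indicator (measurableSet_singleton ⊤)
  have hterm_meas (l : ℕ) : Measurable fun ω => (∏ i ∈ Finset.range l, expOnFinite β (U i ω)) *
      ({⊤} : Set ℝ≥0∞).indicator 1 (U l ω) :=
    (Finset.measurable_prod _ fun i _ => (measurable_expOnFinite β).comp (hmeas i)).mul
      (hind_meas.comp (hmeas l))
  have hterm (l : ℕ) : ∫⁻ ω, (∏ i ∈ Finset.range l, expOnFinite β (U i ω)) *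
      ({⊤} : Set ℝ≥0∞).indicator 1 (U l ω) ∂μ = m ^ l * μ {ω | U 0 ω = ⊤} := by
    rw [lintegral_prod_range_mul_eq_pow_mul hmeas hindep hident (measurable_expOnFinite β)
      hind_meas l]
    exact congrArg _ (lintegral_indicator_one ((hmeas 0) (measurableSet_singleton ⊤)))
  calc _ ≤ ∫⁻ ω, 1 + ∑' l, (∏ i ∈ Finset.range l, expOnFinite β (U i ω)) *
          ({⊤} : Set ℝ≥0∞).indicator 1 (U l ω) ∂μ :=
        lintegral_mono fun ω => ofReal_exp_sum_le_one_add_tsum β (U · ω)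
    _ = 1 + (1 - m)⁻¹ * μ {ω | U 0 ω = ⊤} := by
        rw [lintegral_add_left measurable_const,
          lintegral_tsum fun l => (hterm_meas l).aemeasurable]
        simp only [hterm, lintegral_const, measure_univ, mul_one, ENNReal.tsum_mul_right,
          ENNReal.tsum_geometric]
    _ < ⊤ := ENNReal.add_lt_top.2 ⟨ENNReal.one_lt_top,
        ENNReal.mul_lt_top (ENNReal.inv_lt_top.2 (tsub_pos_of_lt hm)) (measure_lt_top μ _)⟩

/-- Restart argument: `U i` are i.i.d. `[0,∞]`-valued with `P(U = ∞) > 0` and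
exponentially decaying tails on the finite part. With `L = min {i : U i = ∞}`
(zero-based, so `L` plays the role of `L - 1`) and `T = ∑_{i < L} U i`,
there is `β > 0` with `E[e^{βT}] < ∞`. -/
theorem stmt_1 {Ω : Type*} [MeasurableSpace Ω] (μ : Measure Ω) [IsProbabilityMeasure μ]
    (U : ℕ → Ω → ℝ≥0∞) (hmeas : ∀ i, Measurable (U i))
    (hindep : iIndepFun U μ)
    (hident : ∀ i, IdentDistrib (U i) (U 0) μ μ)
    (hpos : 0 < μ {ω | U 0 ω = ⊤})
    (C₁ C₂ : ℝ) (hC₁ : 0 < C₁) (hC₂ : 0 < C₂)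
    (htail : ∀ t : ℝ, 0 < t →
      μ {ω | ENNReal.ofReal t < U 0 ω ∧ U 0 ω ≠ ⊤} ≤
        ENNReal.ofReal (C₁ * Real.exp (-C₂ * t))) :
    ∃ β : ℝ, 0 < β ∧
      ∫⁻ ω, ENNReal.ofReal
        (Real.exp (β * (∑ i ∈ Finset.range (sInf {i | U i ω = ⊤}), U i ω).toReal)) ∂μ < ⊤ :=
  stmt_1_general μ U hmeas hindep hident hpos C₁ C₂ hC₂ htail
end

section
/- Let (ξ_n)_{n≥1} be square-integrable real random variables with E[ξ_n] = 0 for all n, Var[ξ_i] ≤ c, and |Cov[ξ_j, ξ_k]| ≤ C Φ(k − j) for j < k, where Φ : ℕ → [0,∞) is decreasing and summable. Set S_n = Σ_{i=1}^n ξ_i. Then S_n / n → 0 almost surely as n → ∞. -/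
open MeasureTheory ProbabilityTheory Filter
open scoped ENNReal Topology

/-! The covariance bound makes `E[(∑ i ∈ s, ξ i)²] ≤ (c + 2 C ∑ Φ) · #s` for every finite `s`.
Along the squares this gives `E[(S (m²) / m²)²] = O(1 / m²)`, and for the gaps, with
`s = ⌊√n⌋`, `E[((S n - S (s²)) / s²)²] = O(s / s⁴) = O(n ^ (-3/2))`. Both are summable, and a
sequence of nonnegative functions with summable integrals has an a.e. finite sum, hence tends to
`0` a.e. Finally `s² ≤ n` gives `|S n / n| ≤ |S (s²) / s² + (S n - S (s²)) / s²|`. -/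

theorem ae_tendsto_zero_of_summable_integral {Ω : Type*} [MeasurableSpace Ω] {μ : Measure Ω}
    {f : ℕ → Ω → ℝ} (hf_nonneg : ∀ n ω, 0 ≤ f n ω) (hf : ∀ n, Integrable (f n) μ)
    (hsum : Summable fun n => ∫ ω, f n ω ∂μ) :
    ∀ᵐ ω ∂μ, Tendsto (fun n => f n ω) atTop (𝓝 0) := by
  have hmeas : ∀ n, AEMeasurable (fun ω => ENNReal.ofReal (f n ω)) μ :=
    fun n => (hf n).aemeasurable.ennreal_ofReal
  have hfin : ∫⁻ ω, ∑' n, ENNReal.ofReal (f n ω) ∂μ ≠ ∞ := by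
    rw [lintegral_tsum hmeas]
    simp_rw [← ofReal_integral_eq_lintegral_ofReal (hf _) (.of_forall (hf_nonneg _))]
    rw [← ENNReal.ofReal_tsum_of_nonneg (fun n => integral_nonneg (hf_nonneg n)) hsum]
    exact ENNReal.ofReal_ne_top
  filter_upwards [ae_lt_top' (AEMeasurable.tsum hmeas) hfin] with ω hω
  have h := (ENNReal.tendsto_toReal ENNReal.zero_ne_top).comp
    (ENNReal.tendsto_atTop_zero_of_tsum_ne_top hω.ne)
  exact h.congr fun n => ENNReal.toReal_ofReal (hf_nonneg n ω)

theorem Finset.sum_comp_le_tsum_of_injOn {ι κ : Type*} {ρ : κ → ℝ} (hρ_nonneg : ∀ d, 0 ≤ ρ d)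
    (hρ : Summable ρ) {s : Finset ι} {g : ι → κ} (hg : Set.InjOn g s) :
    ∑ j ∈ s, ρ (g j) ≤ ∑' d, ρ d := by
  classical
  rw [← Finset.sum_image hg]
  exact hρ.sum_le_tsum _ fun d _ => hρ_nonneg d

section CovarianceDecay

variable {Ω : Type*} [MeasurableSpace Ω] {μ : Measure Ω} {ξ : ℕ → Ω → ℝ} {c : ℝ} {ρ : ℕ → ℝ}

theorem sum_integral_mul_le (hsq : ∀ i, ∫ ω, ξ i ω ^ 2 ∂μ ≤ c) (hρ_nonneg : ∀ d, 0 ≤ ρ d)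
    (hρ : Summable ρ) (hcov : ∀ j k, j < k → |∫ ω, ξ j ω * ξ k ω ∂μ| ≤ ρ (k - j))
    (s : Finset ℕ) (i : ℕ) :
    ∑ j ∈ s, ∫ ω, ξ i ω * ξ j ω ∂μ ≤ c + 2 * ∑' d, ρ d := by
  have hc : 0 ≤ c := (integral_nonneg fun ω => sq_nonneg (ξ 0 ω)).trans (hsq 0)
  have hterm : ∀ j, ∫ ω, ξ i ω * ξ j ω ∂μ ≤ (if j < i then ρ (i - j) else 0)
      + (if j = i then c else 0) + (if i < j then ρ (j - i) else 0) := by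
    intro j
    rcases lt_trichotomy j i with hji | rfl | hij
    · have := (le_abs_self _).trans (hcov j i hji)
      simp only [hji, hji.ne, hji.not_gt, if_true, if_false]
      simpa only [mul_comm, add_zero] using this
    · simpa [← sq] using hsq j
    · simp only [hij, hij.ne', hij.not_gt, if_true, if_false, zero_add]
      exact (le_abs_self _).trans (hcov i j hij)
  calc ∑ j ∈ s, ∫ ω, ξ i ω * ξ j ω ∂μ
      ≤ ∑ j ∈ s with j < i, ρ (i - j) + (if i ∈ s then c else 0)
        + ∑ j ∈ s with i < j, ρ (j - i) := by
        rw [Finset.sum_filter, Finset.sum_filter, ← Finset.sum_ite_eq' s i fun _ => c,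
          ← Finset.sum_add_distrib, ← Finset.sum_add_distrib]
        exact Finset.sum_le_sum fun j _ => hterm j
    _ ≤ ∑' d, ρ d + c + ∑' d, ρ d := by
        gcongr
        · exact Finset.sum_comp_le_tsum_of_injOn hρ_nonneg hρ fun j hj k hk h => by
            simp only [Finset.coe_filter, Set.mem_ofPred_eq] at hj hk; omega
        · split_ifs <;> simp [hc]
        · exact Finset.sum_comp_le_tsum_of_injOn hρ_nonneg hρ fun j hj k hk h => by
            simp only [Finset.coe_filter, Set.mem_ofPred_eq] at hj hk; omega
    _ = c + 2 * ∑' d, ρ d := by ring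

theorem integral_sq_sum_le (hξ : ∀ i, MemLp (ξ i) 2 μ) (hsq : ∀ i, ∫ ω, ξ i ω ^ 2 ∂μ ≤ c)
    (hρ_nonneg : ∀ d, 0 ≤ ρ d) (hρ : Summable ρ)
    (hcov : ∀ j k, j < k → |∫ ω, ξ j ω * ξ k ω ∂μ| ≤ ρ (k - j)) (s : Finset ℕ) :
    ∫ ω, (∑ i ∈ s, ξ i ω) ^ 2 ∂μ ≤ (c + 2 * ∑' d, ρ d) * s.card := by
  have hint : ∀ i j, Integrable (fun ω => ξ i ω * ξ j ω) μ := fun i j =>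
    (hξ i).integrable_mul (hξ j)
  calc ∫ ω, (∑ i ∈ s, ξ i ω) ^ 2 ∂μ
      = ∑ i ∈ s, ∑ j ∈ s, ∫ ω, ξ i ω * ξ j ω ∂μ := by
        simp_rw [sq, Finset.sum_mul_sum]
        rw [integral_finsetSum _ fun i _ => integrable_finsetSum _ fun j _ => hint i j]
        exact Finset.sum_congr rfl fun i _ => integral_finsetSum _ fun j _ => hint i j
    _ ≤ ∑ _i ∈ s, (c + 2 * ∑' d, ρ d) :=
        Finset.sum_le_sum fun i _ => sum_integral_mul_le hsq hρ_nonneg hρ hcov s i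
    _ = (c + 2 * ∑' d, ρ d) * s.card := by rw [Finset.sum_const, nsmul_eq_mul, mul_comm]

theorem ae_tendsto_sum_div_zero (hξ : ∀ i, MemLp (ξ i) 2 μ) (hsq : ∀ i, ∫ ω, ξ i ω ^ 2 ∂μ ≤ c)
    (hρ_nonneg : ∀ d, 0 ≤ ρ d) (hρ : Summable ρ)
    (hcov : ∀ j k, j < k → |∫ ω, ξ j ω * ξ k ω ∂μ| ≤ ρ (k - j))
    {s : ℕ → Finset ℕ} {q : ℕ → ℝ} (hsq_sum : Summable fun n => ((s n).card : ℝ) / q n ^ 2) :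
    ∀ᵐ ω ∂μ, Tendsto (fun n => (∑ i ∈ s n, ξ i ω) / q n) atTop (𝓝 0) := by
  have hint : ∀ n, Integrable (fun ω => (∑ i ∈ s n, ξ i ω) ^ 2 / q n ^ 2) μ := fun n =>
    (memLp_finsetSum _ fun i _ => hξ i).integrable_sq.div_const _
  have hbound : ∀ n, ∫ ω, (∑ i ∈ s n, ξ i ω) ^ 2 / q n ^ 2 ∂μ
      ≤ (c + 2 * ∑' d, ρ d) * (((s n).card : ℝ) / q n ^ 2) := fun n => by
    rw [integral_div, mul_div_assoc']
    exact div_le_div_of_nonneg_right (integral_sq_sum_le hξ hsq hρ_nonneg hρ hcov (s n))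
      (sq_nonneg _)
  have hsq_tendsto := ae_tendsto_zero_of_summable_integral (fun n ω => by positivity) hint
    (.of_nonneg_of_le (fun n => integral_nonneg fun ω => by positivity) hbound
      (hsq_sum.mul_left _))
  filter_upwards [hsq_tendsto] with ω hω
  rw [tendsto_zero_iff_abs_tendsto_zero]
  simpa [Function.comp_def, ← div_pow, Real.sqrt_sq_eq_abs] using hω.sqrt

end CovarianceDecay

theorem Nat.tendsto_sqrt_atTop : Tendsto Nat.sqrt atTop atTop :=
  tendsto_atTop_atTop.2 fun b => ⟨b ^ 2, fun _ hn => Nat.le_sqrt'.2 hn⟩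

theorem tendsto_sum_range_div_of_sqrt_blocks {x : ℕ → ℝ}
    (hsq : Tendsto (fun m : ℕ => (∑ i ∈ Finset.range (m ^ 2), x i) / (m : ℝ) ^ 2) atTop (𝓝 0))
    (hgap : Tendsto (fun n : ℕ => (∑ i ∈ Finset.Ico (Nat.sqrt n ^ 2) n, x i) / (Nat.sqrt n : ℝ) ^ 2)
      atTop (𝓝 0)) :
    Tendsto (fun n : ℕ => (∑ i ∈ Finset.range n, x i) / n) atTop (𝓝 0) := by
  refine squeeze_zero_norm' ?_ (by simpa using ((hsq.comp Nat.tendsto_sqrt_atTop).add hgap).abs)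
  filter_upwards [eventually_ge_atTop 1] with n hn
  set s := Nat.sqrt n
  have hs : (0 : ℝ) < (s : ℝ) ^ 2 := by have := Nat.sqrt_pos.2 hn; positivity
  have hsn : (s : ℝ) ^ 2 ≤ n := by exact_mod_cast Nat.sqrt_le' n
  rw [← Finset.sum_range_add_sum_Ico x (Nat.sqrt_le' n), Real.norm_eq_abs, abs_div, Nat.abs_cast,
    ← add_div, abs_div, abs_of_pos hs]
  gcongr

theorem summable_card_range_sq_div :
    Summable fun m : ℕ => ((Finset.range (m ^ 2)).card : ℝ) / ((m : ℝ) ^ 2) ^ 2 := by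
  refine (Real.summable_one_div_nat_pow.2 one_lt_two).congr fun m => ?_
  rcases eq_or_ne m 0 with rfl | hm
  · simp
  · field_simp; simp

theorem summable_card_Ico_sqrt_sq_div :
    Summable fun n : ℕ =>
      ((Finset.Ico (Nat.sqrt n ^ 2) n).card : ℝ) / ((Nat.sqrt n : ℝ) ^ 2) ^ 2 := by
  refine .of_nonneg_of_le (fun n => by positivity) (fun n => ?_)
    ((Real.summable_one_div_nat_rpow.2 (by norm_num : (1 : ℝ) < 3 / 2)).mul_left 16)
  rcases Nat.eq_zero_or_pos n with rfl | hn
  · simp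
  set s := Nat.sqrt n
  have hs : (1 : ℝ) ≤ s := by exact_mod_cast Nat.sqrt_pos.2 hn
  have hlt : n < (s + 1) ^ 2 := Nat.lt_succ_sqrt' n
  have hcard : ((Finset.Ico (s ^ 2) n).card : ℝ) ≤ 2 * s := by
    have : n - s ^ 2 ≤ 2 * s := by rw [Nat.sub_le_iff_le_add']; nlinarith
    rw [Nat.card_Ico]; exact_mod_cast this
  have hn_le : (n : ℝ) ≤ (2 * s) ^ 2 := by
    have : n ≤ (2 * s) ^ 2 := by nlinarith [Nat.sqrt_pos.2 hn]
    exact_mod_cast this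
  have hpow : (n : ℝ) ^ (3 / 2 : ℝ) ≤ (2 * s) ^ 3 :=
    calc (n : ℝ) ^ (3 / 2 : ℝ) ≤ ((2 * s : ℝ) ^ 2) ^ (3 / 2 : ℝ) :=
          Real.rpow_le_rpow (by positivity) hn_le (by norm_num)
      _ = (2 * s) ^ 3 := by
          rw [← Real.rpow_natCast, ← Real.rpow_mul (by positivity)]; norm_num
  calc ((Finset.Ico (s ^ 2) n).card : ℝ) / ((s : ℝ) ^ 2) ^ 2 ≤ 2 * s / ((s : ℝ) ^ 2) ^ 2 := by
        gcongr
    _ = 16 / (2 * s : ℝ) ^ 3 := by field_simp; ring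
    _ ≤ 16 * (1 / (n : ℝ) ^ (3 / 2 : ℝ)) := by
        rw [mul_one_div]; gcongr

theorem stmt_4_general {Ω : Type*} [MeasurableSpace Ω] (μ : Measure Ω)
    (ξ : ℕ → Ω → ℝ) (hξ : ∀ i, MemLp (ξ i) 2 μ)
    (hcent : ∀ i, ∫ ω, ξ i ω ∂μ = 0)
    (c : ℝ) (hvar : ∀ i, variance (ξ i) μ ≤ c)
    (C : ℝ) (hC : 0 < C) (Φ : ℕ → ℝ) (hΦ0 : ∀ n, 0 ≤ Φ n)
    (hΦsum : Summable Φ)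
    (hcov : ∀ j k : ℕ, j < k → |∫ ω, ξ j ω * ξ k ω ∂μ| ≤ C * Φ (k - j)) :
    ∀ᵐ ω ∂μ, Tendsto (fun n : ℕ => (∑ i ∈ Finset.range n, ξ i ω) / n) atTop (𝓝 0) := by
  have hsq : ∀ i, ∫ ω, ξ i ω ^ 2 ∂μ ≤ c := fun i =>
    (variance_of_integral_eq_zero (hξ i).aemeasurable (hcent i)).symm.trans_le (hvar i)
  have hρ_nonneg : ∀ d, 0 ≤ C * Φ d := fun d => mul_nonneg hC.le (hΦ0 d)
  have hsquares := ae_tendsto_sum_div_zero hξ hsq hρ_nonneg (hΦsum.mul_left C) hcov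
    summable_card_range_sq_div
  have hgaps := ae_tendsto_sum_div_zero hξ hsq hρ_nonneg (hΦsum.mul_left C) hcov
    summable_card_Ico_sqrt_sq_div
  filter_upwards [hsquares, hgaps] with ω
  exact tendsto_sum_range_div_of_sqrt_blocks

/-- Strong law of large numbers under covariance decay: centered square-integrable
variables with `Var[ξ i] ≤ c` and `|Cov[ξ j, ξ k]| ≤ C Φ(k - j)` for a decreasing
summable `Φ` satisfy `S n / n → 0` almost surely. -/
theorem stmt_4 {Ω : Type*} [MeasurableSpace Ω] (μ : Measure Ω) [IsProbabilityMeasure μ]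
    (ξ : ℕ → Ω → ℝ) (hξ : ∀ i, MemLp (ξ i) 2 μ)
    (hcent : ∀ i, ∫ ω, ξ i ω ∂μ = 0)
    (c : ℝ) (hvar : ∀ i, variance (ξ i) μ ≤ c)
    (C : ℝ) (hC : 0 < C) (Φ : ℕ → ℝ) (hΦ0 : ∀ n, 0 ≤ Φ n)
    (hΦmono : Antitone Φ) (hΦsum : Summable Φ)
    (hcov : ∀ j k : ℕ, j < k → |∫ ω, ξ j ω * ξ k ω ∂μ| ≤ C * Φ (k - j)) :
    ∀ᵐ ω ∂μ, Tendsto (fun n : ℕ => (∑ i ∈ Finset.range n, ξ i ω) / n) atTop (𝓝 0) :=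
  stmt_4_general μ ξ hξ hcent c hvar C hC Φ hΦ0 hΦsum hcov
end

section
/- Let (X_n)_{n≥1} be square-integrable real random variables. For N > 0 define the truncation T^N(x) = max(min(x,N), −N) and remainder R^N(x) = x − T^N(x). Suppose that uniformly in n, (1/n) Σ_{i,j=1}^n Cov[R^N(X_i), R^N(X_j)] → 0 as N → ∞, and that Σ_{i=1}^n (T^N(X_i) − E[T^N(X_i)])/√n converges in distribution to N(0, s_N²) for each N, with s_N² → s² as N → ∞. Then Σ_{i=1}^n (X_i − E[X_i])/√n converges in distribution to N(0, s²). -/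
/-!
Write `S_n(Y) = ∑_{i<n} (Y_i - E Y_i) / √n`. Since `X_i = T^N(X_i) + R^N(X_i)`, we have
`S_n(X) - S_n(T^N X) = S_n(R^N X)`, whose second moment is exactly the averaged covariance sum
`(1/n) ∑_{i,j} Cov[R^N(X_i), R^N(X_j)]`; by Chebyshev, the laws of `S_n(X)` and `S_n(T^N X)` are
therefore close in the Lévy–Prokhorov metric, uniformly in `n`, once `N` is large. The laws of
`S_n(T^N X)` tend to `N(0, s_N²)`, and these Gaussians tend to `N(0, s²)` because their
characteristic functions `exp(-s_N² t² / 2)` do. A three-`ε` argument in the Lévy–Prokhorov metric,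
which metrizes convergence in distribution, concludes.
-/

open MeasureTheory ProbabilityTheory Filter
open scoped ENNReal NNReal Topology

theorem Metric.tendsto_of_forall_eventually_dist_le {α ι κ : Type*} [PseudoMetricSpace α]
    {l : Filter ι} [l.NeBot] {l' : Filter κ} {x : κ → α} {y : ι → κ → α} {z : ι → α} {a : α}
    (hy : ∀ N, Tendsto (y N) l' (𝓝 (z N))) (hz : Tendsto z l (𝓝 a))
    (hxy : ∀ δ > 0, ∀ᶠ N in l, ∀ᶠ n in l', dist (x n) (y N n) ≤ δ) :
    Tendsto x l' (𝓝 a) := by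
  refine Metric.tendsto_nhds.2 fun ε hε => ?_
  obtain ⟨N, hxyN, hzN⟩ :=
    ((hxy (ε / 3) (by positivity)).and (Metric.tendsto_nhds.1 hz (ε / 3) (by positivity))).exists
  filter_upwards [hxyN, Metric.tendsto_nhds.1 (hy N) (ε / 3) (by positivity)] with n hxn hyn
  calc dist (x n) a ≤ dist (x n) (y N n) + dist (y N n) (z N) + dist (z N) a :=
        dist_triangle4 _ _ _ _
    _ < ε := by linarith

theorem measure_map_le_map_thickening_add_of_measure_le_dist_le {Ω E : Type*}
    [MeasurableSpace Ω] [PseudoMetricSpace E] [MeasurableSpace E] [OpensMeasurableSpace E]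
    {μ : Measure Ω} {g h : Ω → E} (hg : AEMeasurable g μ) (hh : AEMeasurable h μ) {δ : ℝ}
    (hδ : 0 ≤ δ) (hgh : μ {ω | δ ≤ dist (g ω) (h ω)} ≤ ENNReal.ofReal δ) {ε : ℝ≥0∞}
    (hε : ENNReal.ofReal δ < ε) (hεtop : ε ≠ ∞) {B : Set E} (hB : MeasurableSet B) :
    μ.map g B ≤ μ.map h (Metric.thickening ε.toReal B) + ε := by
  have hδε : δ < ε.toReal := (ENNReal.ofReal_lt_iff_lt_toReal hδ hεtop).1 hε
  rw [Measure.map_apply_of_aemeasurable hg hB,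
    Measure.map_apply_of_aemeasurable hh Metric.isOpen_thickening.measurableSet]
  have hcover : g ⁻¹' B ⊆ h ⁻¹' Metric.thickening ε.toReal B ∪ {ω | δ ≤ dist (g ω) (h ω)} := by
    intro ω hω
    by_cases hc : δ ≤ dist (g ω) (h ω)
    · exact Or.inr hc
    · exact Or.inl (Metric.mem_thickening_iff.2 ⟨g ω, hω, by rw [dist_comm]; linarith⟩)
  calc μ (g ⁻¹' B) ≤ μ (h ⁻¹' Metric.thickening ε.toReal B) + μ {ω | δ ≤ dist (g ω) (h ω)} :=
        (measure_mono hcover).trans (measure_union_le _ _)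
    _ ≤ μ (h ⁻¹' Metric.thickening ε.toReal B) + ε := by gcongr; exact hgh.trans hε.le

theorem levyProkhorovEDist_map_le_of_measure_le_dist_le {Ω E : Type*} [MeasurableSpace Ω]
    [PseudoMetricSpace E] [MeasurableSpace E] [OpensMeasurableSpace E] {μ : Measure Ω}
    {g h : Ω → E} (hg : AEMeasurable g μ) (hh : AEMeasurable h μ) {δ : ℝ} (hδ : 0 ≤ δ)
    (hgh : μ {ω | δ ≤ dist (g ω) (h ω)} ≤ ENNReal.ofReal δ) :
    levyProkhorovEDist (μ.map g) (μ.map h) ≤ ENNReal.ofReal δ := by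
  have hhg : μ {ω | δ ≤ dist (h ω) (g ω)} ≤ ENNReal.ofReal δ := by
    simpa only [dist_comm] using hgh
  exact levyProkhorovEDist_le_of_forall _ _ _ fun ε B hε hεtop hB =>
    ⟨measure_map_le_map_thickening_add_of_measure_le_dist_le hg hh hδ hgh hε hεtop.ne hB,
      measure_map_le_map_thickening_add_of_measure_le_dist_le hh hg hδ hhg hε hεtop.ne hB⟩

theorem measure_abs_ge_le_ofReal_integral_sq_div_sq {Ω : Type*} [MeasurableSpace Ω]
    {μ : Measure Ω} [IsFiniteMeasure μ] {d : Ω → ℝ} (hd : MemLp d 2 μ) {δ : ℝ} (hδ : 0 < δ) :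
    μ {ω | δ ≤ |d ω|} ≤ ENNReal.ofReal ((∫ ω, d ω ^ 2 ∂μ) / δ ^ 2) := by
  have hmarkov : δ ^ 2 * μ.real {ω | δ ^ 2 ≤ d ω ^ 2} ≤ ∫ ω, d ω ^ 2 ∂μ :=
    mul_meas_ge_le_integral_of_nonneg (ae_of_all _ fun ω => sq_nonneg (d ω)) hd.integrable_sq _
  have hsq : {ω | δ ≤ |d ω|} = {ω | δ ^ 2 ≤ d ω ^ 2} := by
    ext ω
    simp only [Set.mem_ofPred_eq, ← sq_abs (d ω)]
    exact (pow_le_pow_iff_left₀ hδ.le (abs_nonneg _) two_ne_zero).symm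
  rw [hsq, ← ofReal_measureReal]
  exact ENNReal.ofReal_le_ofReal ((le_div_iff₀' (by positivity)).2 hmarkov)

theorem ProbabilityMeasure.tendsto_of_forall_eventually_levyProkhorovEDist_le
    {ι κ E : Type*} [PseudoMetricSpace E] [TopologicalSpace.SeparableSpace E] [MeasurableSpace E]
    [BorelSpace E] {l : Filter ι} [l.NeBot] {l' : Filter κ} {P : κ → ProbabilityMeasure E}
    {Q : ι → κ → ProbabilityMeasure E} {ν : ι → ProbabilityMeasure E} {ν₀ : ProbabilityMeasure E}
    (hQ : ∀ N, Tendsto (Q N) l' (𝓝 (ν N))) (hν : Tendsto ν l (𝓝 ν₀))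
    (hPQ : ∀ δ > 0, ∀ᶠ N in l, ∀ᶠ n in l',
      levyProkhorovEDist (P n : Measure E) (Q N n) ≤ ENNReal.ofReal δ) :
    Tendsto P l' (𝓝 ν₀) := by
  let e := LevyProkhorov.probabilityMeasureHomeomorph (Ω := E)
  rw [e.isEmbedding.tendsto_nhds_iff]
  refine Metric.tendsto_of_forall_eventually_dist_le
    (fun N => (e.continuous.tendsto _).comp (hQ N)) ((e.continuous.tendsto _).comp hν)
    fun δ hδ => ?_
  filter_upwards [hPQ δ hδ] with N hN
  filter_upwards [hN] with n hn
  exact ENNReal.toReal_le_of_le_ofReal hδ.le hn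

theorem tendsto_integral_comp_of_tendsto_integral_sq_sub {Ω ι κ : Type*} [MeasurableSpace Ω]
    {μ : Measure Ω} [IsProbabilityMeasure μ] {l : Filter ι} [l.NeBot] {l' : Filter κ}
    {Y : κ → Ω → ℝ} {Z : ι → κ → Ω → ℝ} {ν : ι → ProbabilityMeasure ℝ} {ν₀ : ProbabilityMeasure ℝ}
    (hY : ∀ n, AEMeasurable (Y n) μ) (hZ : ∀ N n, AEMeasurable (Z N n) μ)
    (hYZ : ∀ N n, MemLp (Y n - Z N n) 2 μ)
    (hZν : ∀ N (f : BoundedContinuousFunction ℝ ℝ),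
      Tendsto (fun n => ∫ ω, f (Z N n ω) ∂μ) l' (𝓝 (∫ x, f x ∂(ν N : Measure ℝ))))
    (hν : Tendsto ν l (𝓝 ν₀))
    (hsmall : ∀ ε > 0, ∀ᶠ N in l, ∀ᶠ n in l', ∫ ω, (Y n ω - Z N n ω) ^ 2 ∂μ ≤ ε)
    (f : BoundedContinuousFunction ℝ ℝ) :
    Tendsto (fun n => ∫ ω, f (Y n ω) ∂μ) l' (𝓝 (∫ x, f x ∂(ν₀ : Measure ℝ))) := by
  let P : κ → ProbabilityMeasure ℝ := fun n =>
    ⟨μ.map (Y n), Measure.isProbabilityMeasure_map (hY n)⟩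
  let Q : ι → κ → ProbabilityMeasure ℝ := fun N n =>
    ⟨μ.map (Z N n), Measure.isProbabilityMeasure_map (hZ N n)⟩
  have hQ : ∀ N, Tendsto (Q N) l' (𝓝 (ν N)) := fun N =>
    ProbabilityMeasure.tendsto_iff_forall_integral_tendsto.2 fun f =>
      (hZν N f).congr fun n => (integral_map (hZ N n) f.continuous.aestronglyMeasurable).symm
  have hP : Tendsto P l' (𝓝 ν₀) := by
    refine ProbabilityMeasure.tendsto_of_forall_eventually_levyProkhorovEDist_le hQ hν
      fun δ hδ => ?_
    -- Chebyshev at level `δ` turns an `L²` bound `δ ^ 3` into `P(|Y - Z| ≥ δ) ≤ δ`.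
    filter_upwards [hsmall (δ ^ 3) (by positivity)] with N hN
    filter_upwards [hN] with n hn
    refine levyProkhorovEDist_map_le_of_measure_le_dist_le (hY n) (hZ N n) hδ.le ?_
    refine (measure_abs_ge_le_ofReal_integral_sq_div_sq (hYZ N n) hδ).trans
      (ENNReal.ofReal_le_ofReal ((div_le_iff₀ (by positivity)).2 ?_))
    simpa only [Pi.sub_apply, ← pow_succ'] using hn
  exact (ProbabilityMeasure.tendsto_iff_forall_integral_tendsto.1 hP f).congr fun n =>
    integral_map (hY n) f.continuous.aestronglyMeasurable

theorem continuous_gaussianReal_probabilityMeasure (m : ℝ) :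
    Continuous (Y := ProbabilityMeasure ℝ) fun v : ℝ≥0 => ⟨gaussianReal m v, inferInstance⟩ := by
  refine continuous_iff_seqContinuous.2 fun v v₀ hv => ?_
  refine ProbabilityMeasure.tendsto_of_tendsto_charFun fun t => ?_
  rw [ProbabilityMeasure.coe_mk, charFun_gaussianReal]
  have hcont : Continuous fun w : ℝ≥0 => Complex.exp (t * m * Complex.I - w * t ^ 2 / 2) := by
    fun_prop
  exact ((hcont.tendsto v₀).comp hv).congr fun n => (charFun_gaussianReal t).symm

theorem abs_max_min_neg_le_abs (x N : ℝ) : |max (min x N) (-N)| ≤ |N| :=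
  abs_le.2 ⟨(neg_le_neg (le_abs_self N)).trans (le_max_right _ _),
    max_le ((min_le_right _ _).trans (le_abs_self N)) (neg_le_abs N)⟩

section

variable {Ω : Type*} [MeasurableSpace Ω] {μ : Measure Ω}

theorem memLp_max_min_neg [IsFiniteMeasure μ] {f : Ω → ℝ} {p : ℝ≥0∞}
    (hf : AEStronglyMeasurable f μ) (N : ℝ) :
    MemLp (fun ω => max (min (f ω) N) (-N)) p μ :=
  MemLp.of_bound (by fun_prop) |N| (ae_of_all _ fun ω => abs_max_min_neg_le_abs (f ω) N)

theorem integral_sq_finsetSum {ι : Type*} {s : Finset ι} {c : ι → Ω → ℝ}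
    (hc : ∀ i ∈ s, MemLp (c i) 2 μ) :
    ∫ ω, (∑ i ∈ s, c i ω) ^ 2 ∂μ = ∑ i ∈ s, ∑ j ∈ s, ∫ ω, c i ω * c j ω ∂μ := by
  have hint : ∀ i ∈ s, ∀ j ∈ s, Integrable (fun ω => c i ω * c j ω) μ :=
    fun i hi j hj => (hc i hi).integrable_mul (hc j hj)
  simp_rw [sq, Finset.sum_mul_sum]
  rw [integral_finsetSum _ fun i hi => integrable_finsetSum _ (hint i hi)]
  exact Finset.sum_congr rfl fun i hi => integral_finsetSum _ (hint i hi)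

noncomputable def normalizedCenteredSum (μ : Measure Ω) (Y : ℕ → Ω → ℝ) (n : ℕ) (ω : Ω) : ℝ :=
  (∑ i ∈ Finset.range n, (Y i ω - ∫ ω', Y i ω' ∂μ)) / Real.sqrt n

theorem memLp_normalizedCenteredSum [IsFiniteMeasure μ] {Y : ℕ → Ω → ℝ} {p : ℝ≥0∞}
    (hY : ∀ i, MemLp (Y i) p μ) (n : ℕ) : MemLp (normalizedCenteredSum μ Y n) p μ := by
  have hYc : ∀ i, MemLp (fun ω => Y i ω - ∫ ω', Y i ω' ∂μ) p μ :=
    fun i => (hY i).sub (memLp_const _)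
  unfold normalizedCenteredSum
  simp_rw [div_eq_mul_inv]
  exact (memLp_finsetSum _ fun i _ => hYc i).mul_const _

theorem normalizedCenteredSum_sub {Y Z : ℕ → Ω → ℝ} (hY : ∀ i, Integrable (Y i) μ)
    (hZ : ∀ i, Integrable (Z i) μ) (n : ℕ) :
    normalizedCenteredSum μ Y n - normalizedCenteredSum μ Z n
      = normalizedCenteredSum μ (fun i ω => Y i ω - Z i ω) n := by
  funext ω
  simp only [normalizedCenteredSum, Pi.sub_apply, div_sub_div_same, ← Finset.sum_sub_distrib,
    integral_sub (hY _) (hZ _)]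
  congr 1
  refine Finset.sum_congr rfl fun i _ => ?_
  ring

theorem integral_normalizedCenteredSum_sq [IsFiniteMeasure μ] {Y : ℕ → Ω → ℝ}
    (hY : ∀ i, MemLp (Y i) 2 μ) (n : ℕ) :
    ∫ ω, normalizedCenteredSum μ Y n ω ^ 2 ∂μ
      = 1 / n * ∑ i ∈ Finset.range n, ∑ j ∈ Finset.range n,
          ∫ ω, (Y i ω - ∫ ω', Y i ω' ∂μ) * (Y j ω - ∫ ω', Y j ω' ∂μ) ∂μ := by
  have hYc : ∀ i, MemLp (fun ω => Y i ω - ∫ ω', Y i ω' ∂μ) 2 μ :=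
    fun i => (hY i).sub (memLp_const _)
  simp_rw [normalizedCenteredSum, div_pow, Real.sq_sqrt n.cast_nonneg]
  rw [integral_div, integral_sq_finsetSum fun i _ => hYc i]
  ring

end

/-- Truncation argument for the CLT: if the covariance contribution of the remainders
`R^N(X_i)` vanishes as `N → ∞` uniformly in `n`, and the normalized sums of the
truncated centered variables converge in distribution to `N(0, s_N²)` with
`s_N² → s²`, then the normalized sums of the centered `X_i` converge in
distribution to `N(0, s²)`. -/
theorem stmt_10 {Ω : Type*} [MeasurableSpace Ω] (μ : Measure Ω) [IsProbabilityMeasure μ]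
    (X : ℕ → Ω → ℝ) (hX : ∀ i, MemLp (X i) 2 μ)
    (T R : ℝ → ℝ → ℝ)
    (hT : ∀ N x, T N x = max (min x N) (-N))
    (hR : ∀ N x, R N x = x - T N x)
    (sSq : ℝ → ℝ≥0) (sSqLim : ℝ≥0)
    (hs : Tendsto (fun N : ℝ => sSq N) atTop (𝓝 sSqLim))
    (hcovR : ∀ ε : ℝ, 0 < ε → ∃ N₀ : ℝ, ∀ N : ℝ, N₀ ≤ N → ∀ n : ℕ, 1 ≤ n →
      |(1 / (n : ℝ)) * ∑ i ∈ Finset.range n, ∑ j ∈ Finset.range n,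
          ∫ ω, (R N (X i ω) - ∫ ω', R N (X i ω') ∂μ) *
            (R N (X j ω) - ∫ ω', R N (X j ω') ∂μ) ∂μ| ≤ ε)
    (hTclt : ∀ N : ℝ, ∀ f : BoundedContinuousFunction ℝ ℝ,
      Tendsto (fun n : ℕ => ∫ ω,
          f ((∑ i ∈ Finset.range n, (T N (X i ω) - ∫ ω', T N (X i ω') ∂μ)) /
            Real.sqrt n) ∂μ)
        atTop (𝓝 (∫ x, f x ∂(gaussianReal 0 (sSq N))))) :
    ∀ f : BoundedContinuousFunction ℝ ℝ,
      Tendsto (fun n : ℕ => ∫ ω,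
          f ((∑ i ∈ Finset.range n, (X i ω - ∫ ω', X i ω' ∂μ)) / Real.sqrt n) ∂μ)
        atTop (𝓝 (∫ x, f x ∂(gaussianReal 0 sSqLim))) := by
  intro f
  have hTX : ∀ N i, MemLp (fun ω => T N (X i ω)) 2 μ := fun N i => by
    simp_rw [hT]
    exact memLp_max_min_neg (hX i).aestronglyMeasurable N
  have hRX : ∀ N i, MemLp (fun ω => R N (X i ω)) 2 μ := fun N i => by
    simp_rw [hR]
    exact (hX i).sub (hTX N i)
  have hdiff : ∀ N n, normalizedCenteredSum μ X n
      - normalizedCenteredSum μ (fun i ω => T N (X i ω)) n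
      = normalizedCenteredSum μ (fun i ω => R N (X i ω)) n := fun N n => by
    rw [normalizedCenteredSum_sub (fun i => (hX i).integrable one_le_two)
      (fun i => (hTX N i).integrable one_le_two)]
    simp_rw [hR]
  refine tendsto_integral_comp_of_tendsto_integral_sq_sub (Y := normalizedCenteredSum μ X)
    (Z := fun N => normalizedCenteredSum μ (fun i ω => T N (X i ω)))
    (ν := fun N => ⟨gaussianReal 0 (sSq N), inferInstance⟩)
    (fun n => (memLp_normalizedCenteredSum hX n).aemeasurable)
    (fun N n => (memLp_normalizedCenteredSum (hTX N) n).aemeasurable)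
    (fun N n => hdiff N n ▸ memLp_normalizedCenteredSum (hRX N) n) hTclt
    (((continuous_gaussianReal_probabilityMeasure 0).tendsto _).comp hs) (fun ε hε => ?_) f
  obtain ⟨N₀, hN₀⟩ := hcovR ε hε
  filter_upwards [eventually_ge_atTop N₀] with N hN
  filter_upwards [eventually_ge_atTop 1] with n hn
  have hsq := integral_normalizedCenteredSum_sq (hRX N) n
  rw [← hdiff N n] at hsq
  exact hsq.trans_le ((le_abs_self _).trans (hN₀ N hN n hn))
end
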